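/- arXiv:2007.03972 — 8 statements merged into one kernel-verified Lean document; each statement's English description precedes it below -/
import Mathlib

section
/- (Correctness of the scheme in Theorem 1.) Let F be a field, let N, T be positive integers with 2T < N and N·1_F ≠ 0 in F, set K = N − 2T, and let α ∈ F be a primitive N-th root of unity. Let A_1, …, A_K and R_1, …, R_T be m×n' matrices over F, and let B_1, …, B_K and S_1, …, S_T be n'×p matrices over F. Define the matrix polynomials A(x) = ∑_{l=1}^{K} A_l x^{l−1} + ∑_{l=1}^{T} R_l x^{K+l−1} and B(x) = ∑_{l=1}^{K} B_l x^{−(l−1)} + ∑_{l=1}^{T} S_l x^{−(K+T+l−1)}. Then (1/N) · ∑_{i=1}^{N} A(α^{i−1}) · B(α^{i−1}) = ∑_{l=1}^{K} A_l B_l. -/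
lemma sdmm_root_sum {F : Type*} [Field F] {N : ℕ} (hNF : (N : F) ≠ 0)
    {α : F} (hα : IsPrimitiveRoot α N) {a b : ℕ} (ha : a < N) (hb : b < N) :
    ∑ i ∈ Finset.range N, α ^ (i * a) * α ^ (-(i : ℤ) * (b : ℤ))
      = if a = b then (N : F) else 0 := by
  have hN0 : N ≠ 0 := fun h => hNF (by simp [h])
  have hα0 : α ≠ 0 := hα.ne_zero hN0
  have hterm : ∀ i : ℕ, α ^ (i * a) * α ^ (-(i : ℤ) * (b : ℤ))
      = (α ^ a * (α ^ b)⁻¹) ^ i := by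
    intro i
    have h1 : α ^ (i * a) = (α ^ a) ^ i := by rw [mul_comm, pow_mul]
    have h2 : α ^ (-(i : ℤ) * (b : ℤ)) = ((α ^ b)⁻¹) ^ i := by
      have : (-(i : ℤ) * (b : ℤ)) = -((i * b : ℕ) : ℤ) := by push_cast; ring
      rw [this, zpow_neg, zpow_natCast, mul_comm i b, pow_mul, inv_pow]
    rw [h1, h2, mul_pow]
  simp only [hterm]
  by_cases hab : a = b
  · subst hab
    simp [mul_inv_cancel₀ (pow_ne_zero a hα0)]
  · have hx1 : α ^ a * (α ^ b)⁻¹ ≠ 1 := by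
      intro h
      apply hab
      apply hα.pow_inj ha hb
      field_simp at h
      exact h
    have hxN : (α ^ a * (α ^ b)⁻¹) ^ N = 1 := by
      rw [mul_pow, inv_pow, ← pow_mul, ← pow_mul, mul_comm a N, mul_comm b N,
        pow_mul, pow_mul, hα.pow_eq_one, one_pow, one_pow, inv_one, mul_one]
    rw [geom_sum_eq hx1, hxN, sub_self, zero_div, if_neg hab]

/-- Correctness of the `(N, N-2T, T)` SDMM scheme (Theorem 1 of the paper):
averaging the `N` servers' products of left-shares of `A` and right-shares of `B`,
evaluated at the `N`-th roots of unity, recovers `∑_l A_l B_l`.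
Server `i ∈ {1,…,N}` of the paper corresponds to index `i-1 ∈ {0,…,N-1}` here, and
block `l ∈ {1,…,K}` to `l-1 ∈ {0,…,K-1}`. -/
theorem sdmm_two_matrices_correct {F : Type*} [Field F] {m n' p : ℕ} (N T : ℕ)
    (hT : 0 < T) (h2T : 2 * T < N) (hNF : (N : F) ≠ 0)
    (α : F) (hα : IsPrimitiveRoot α N) (K : ℕ) (hK : K = N - 2 * T)
    (A : Fin K → Matrix (Fin m) (Fin n') F) (R : Fin T → Matrix (Fin m) (Fin n') F)
    (B : Fin K → Matrix (Fin n') (Fin p) F) (S : Fin T → Matrix (Fin n') (Fin p) F) :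
    (N : F)⁻¹ • ∑ i ∈ Finset.range N,
        ((∑ l : Fin K, α ^ (i * l.1) • A l
            + ∑ l : Fin T, α ^ (i * (K + l.1)) • R l) *
         (∑ l : Fin K, α ^ (-(i : ℤ) * (l.1 : ℤ)) • B l
            + ∑ l : Fin T, α ^ (-(i : ℤ) * ((K + T + l.1 : ℕ) : ℤ)) • S l))
      = ∑ l : Fin K, A l * B l := by
  have hKN : K + 2 * T = N := by omega
  -- combined indexing
  set ea : Fin K ⊕ Fin T → ℕ := Sum.elim (fun l => l.1) (fun l => K + l.1) with hea
  set eb : Fin K ⊕ Fin T → ℕ := Sum.elim (fun l => l.1) (fun l => K + T + l.1) with heb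
  set X : Fin K ⊕ Fin T → Matrix (Fin m) (Fin n') F := Sum.elim A R with hX
  set Y : Fin K ⊕ Fin T → Matrix (Fin n') (Fin p) F := Sum.elim B S with hY
  have hP : ∀ i : ℕ,
      (∑ l : Fin K, α ^ (i * l.1) • A l + ∑ l : Fin T, α ^ (i * (K + l.1)) • R l)
        = ∑ j : Fin K ⊕ Fin T, α ^ (i * ea j) • X j := by
    intro i; rw [Fintype.sum_sum_type]; rfl
  have hQ : ∀ i : ℕ,
      (∑ l : Fin K, α ^ (-(i : ℤ) * (l.1 : ℤ)) • B l
        + ∑ l : Fin T, α ^ (-(i : ℤ) * ((K + T + l.1 : ℕ) : ℤ)) • S l)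
        = ∑ j : Fin K ⊕ Fin T, α ^ (-(i : ℤ) * (eb j : ℤ)) • Y j := by
    intro i; rw [Fintype.sum_sum_type]; rfl
  have hea_lt : ∀ j, ea j < N := by rintro (l | l) <;> simp [hea] <;> omega
  have heb_lt : ∀ j, eb j < N := by rintro (l | l) <;> simp [heb] <;> omega
  calc (N : F)⁻¹ • ∑ i ∈ Finset.range N,
        ((∑ l : Fin K, α ^ (i * l.1) • A l
            + ∑ l : Fin T, α ^ (i * (K + l.1)) • R l) *
         (∑ l : Fin K, α ^ (-(i : ℤ) * (l.1 : ℤ)) • B l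
            + ∑ l : Fin T, α ^ (-(i : ℤ) * ((K + T + l.1 : ℕ) : ℤ)) • S l))
      = (N : F)⁻¹ • ∑ i ∈ Finset.range N, ∑ j : Fin K ⊕ Fin T, ∑ j' : Fin K ⊕ Fin T,
          (α ^ (i * ea j) * α ^ (-(i : ℤ) * (eb j' : ℤ))) • (X j * Y j') := by
        congr 1
        refine Finset.sum_congr rfl fun i _ => ?_
        rw [hP i, hQ i, Matrix.sum_mul]
        refine Finset.sum_congr rfl fun j _ => ?_
        rw [Matrix.mul_sum]
        refine Finset.sum_congr rfl fun j' _ => ?_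
        rw [Matrix.smul_mul, Matrix.mul_smul, smul_smul]
    _ = (N : F)⁻¹ • ∑ j : Fin K ⊕ Fin T, ∑ j' : Fin K ⊕ Fin T,
          (∑ i ∈ Finset.range N, α ^ (i * ea j) * α ^ (-(i : ℤ) * (eb j' : ℤ))) • (X j * Y j') := by
        rw [Finset.sum_comm]
        congr 1
        refine Finset.sum_congr rfl fun j _ => ?_
        rw [Finset.sum_comm]
        refine Finset.sum_congr rfl fun j' _ => ?_
        rw [Finset.sum_smul]
    _ = (N : F)⁻¹ • ∑ j : Fin K ⊕ Fin T, ∑ j' : Fin K ⊕ Fin T,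
          (if ea j = eb j' then (N : F) else 0) • (X j * Y j') := by
        congr 1
        refine Finset.sum_congr rfl fun j _ => Finset.sum_congr rfl fun j' _ => ?_
        rw [sdmm_root_sum hNF hα (hea_lt j) (heb_lt j')]
    _ = (N : F)⁻¹ • ∑ l : Fin K, (N : F) • (A l * B l) := by
        congr 1
        rw [Fintype.sum_sum_type]
        have h2 : ∑ l : Fin T, ∑ j' : Fin K ⊕ Fin T,
            (if ea (Sum.inr l) = eb j' then (N : F) else 0) • (X (Sum.inr l) * Y j') = 0 := by
          refine Finset.sum_eq_zero fun l _ => Finset.sum_eq_zero fun j' _ => ?_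
          have : ea (Sum.inr l) ≠ eb j' := by
            rcases j' with l' | l' <;> simp [hea, heb] <;> omega
          rw [if_neg this, zero_smul]
        rw [h2, add_zero]
        refine Finset.sum_congr rfl fun l _ => ?_
        rw [Fintype.sum_sum_type]
        have h3 : ∑ l' : Fin T,
            (if ea (Sum.inl l) = eb (Sum.inr l') then (N : F) else 0) • (X (Sum.inl l) * Y (Sum.inr l')) = 0 := by
          refine Finset.sum_eq_zero fun l' _ => ?_
          have : ea (Sum.inl l) ≠ eb (Sum.inr l') := by simp [hea, heb]; omega
          rw [if_neg this, zero_smul]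
        rw [h3, add_zero]
        have h4 : ∀ l' : Fin K, (if ea (Sum.inl l) = eb (Sum.inl l') then (N : F) else 0) • (X (Sum.inl l) * Y (Sum.inl l'))
            = if l' = l then (N : F) • (A l * B l') else 0 := by
          intro l'
          by_cases h : l' = l
          · subst h; simp [hea, heb, hX, hY]
          · have : ea (Sum.inl l) ≠ eb (Sum.inl l') := by
              simp only [hea, heb, Sum.elim_inl]
              exact fun hh => h (Fin.ext hh.symm)
            rw [if_neg this, zero_smul, if_neg h]
        simp only [h4]
        rw [Finset.sum_ite_eq']
        simp
    _ = ∑ l : Fin K, A l * B l := by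
        rw [← Finset.smul_sum, smul_smul, inv_mul_cancel₀ hNF, one_smul]
end

section
/- (Correctness of the scheme in Theorem 2, computation with own data.) Let F be a field, let N, T be positive integers with T < N and N·1_F ≠ 0 in F, set K = N − T, and let α ∈ F be a primitive N-th root of unity. Let A_1, …, A_K and R_1, …, R_T be m×n' matrices over F, and let B_1, …, B_K and S_1, …, S_T be n'×p matrices over F. Define A(x) = ∑_{l=1}^{K} A_l x^{l−1} + ∑_{l=1}^{T} R_l x^{K+l−1} and B(x) = ∑_{l=1}^{K} B_l x^{−(l−1)} + ∑_{l=1}^{T} S_l x^{−(K+l−1)}. Then (1/N) · ∑_{i=1}^{N} A(α^{i−1}) · B(α^{i−1}) = ∑_{l=1}^{K} A_l B_l + ∑_{l=1}^{T} R_l S_l. Consequently a user who knows the key matrices R_l, S_l recovers ∑_{l=1}^{K} A_l B_l by subtracting ∑_{l=1}^{T} R_l S_l from the average. -/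
open Finset

/-- Orthogonality of the characters `i ↦ α^(i j)` for a primitive `N`-th root of unity. -/
lemma sdmm_char_orth {F : Type*} [Field F] {N : ℕ} (hN : 0 < N)
    {α : F} (hα : IsPrimitiveRoot α N) {j k : ℕ} (hj : j < N) (hk : k < N) :
    ∑ i ∈ Finset.range N, α ^ (i * j) * α ^ (-(i : ℤ) * (k : ℤ))
      = if j = k then (N : F) else 0 := by
  have hα0 : α ≠ 0 := hα.ne_zero hN.ne'
  have hterm : ∀ i ∈ Finset.range N,
      α ^ (i * j) * α ^ (-(i : ℤ) * (k : ℤ)) = (α ^ ((j : ℤ) - (k : ℤ))) ^ i := by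
    intro i _
    rw [← zpow_natCast α (i * j), ← zpow_add₀ hα0, ← zpow_natCast (α ^ ((j:ℤ) - k)) i,
      ← zpow_mul]
    congr 1
    push_cast
    ring
  rw [Finset.sum_congr rfl hterm]
  by_cases h : j = k
  · subst h
    simp
  · rw [if_neg h]
    have hβ1 : α ^ ((j : ℤ) - (k : ℤ)) ≠ 1 := by
      intro hone
      rw [hα.zpow_eq_one_iff_dvd] at hone
      have habs : |(j : ℤ) - (k : ℤ)| < (N : ℤ) := by rw [abs_lt]; omega
      have := Int.eq_zero_of_abs_lt_dvd hone habs
      omega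
    rw [geom_sum_eq hβ1]
    have hβN : (α ^ ((j : ℤ) - (k : ℤ))) ^ N = 1 := by
      rw [← zpow_natCast, ← zpow_mul, mul_comm, zpow_mul, zpow_natCast, hα.pow_eq_one,
        one_zpow]
    rw [hβN, sub_self, zero_div]

/-- Correctness of the `(N, N-T, T)` SDMM scheme for computation with own data
(Theorem 2 of the paper): averaging the `N` servers' products yields
`∑_l A_l B_l + ∑_l R_l S_l`, from which a user knowing the keys recovers `∑_l A_l B_l`.
Server `i ∈ {1,…,N}` corresponds to index `i-1 ∈ {0,…,N-1}` here, and block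
`l ∈ {1,…,K}` to `l-1 ∈ {0,…,K-1}`. -/
theorem sdmm_own_data_correct {F : Type*} [Field F] {m n' p : ℕ} (N T : ℕ)
    (hT : 0 < T) (hTN : T < N) (hNF : (N : F) ≠ 0)
    (α : F) (hα : IsPrimitiveRoot α N) (K : ℕ) (hK : K = N - T)
    (A : Fin K → Matrix (Fin m) (Fin n') F) (R : Fin T → Matrix (Fin m) (Fin n') F)
    (B : Fin K → Matrix (Fin n') (Fin p) F) (S : Fin T → Matrix (Fin n') (Fin p) F) :
    (N : F)⁻¹ • ∑ i ∈ Finset.range N,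
        ((∑ l : Fin K, α ^ (i * l.1) • A l
            + ∑ l : Fin T, α ^ (i * (K + l.1)) • R l) *
         (∑ l : Fin K, α ^ (-(i : ℤ) * (l.1 : ℤ)) • B l
            + ∑ l : Fin T, α ^ (-(i : ℤ) * ((K + l.1 : ℕ) : ℤ)) • S l))
      = ∑ l : Fin K, A l * B l + ∑ l : Fin T, R l * S l := by
  have hN : 0 < N := hT.trans hTN
  have hKN : K < N := by omega
  have hNK : N - K = T := by omega
  -- combined block matrices
  set M : ℕ → Matrix (Fin m) (Fin n') F := fun j =>
    if h : j < K then A ⟨j, h⟩ else if h' : j - K < T then R ⟨j - K, h'⟩ else 0 with hM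
  set Q : ℕ → Matrix (Fin n') (Fin p) F := fun j =>
    if h : j < K then B ⟨j, h⟩ else if h' : j - K < T then S ⟨j - K, h'⟩ else 0 with hQ
  -- rewrite the four Fin-indexed sums as range sums over M, Q
  have hA : ∀ i, (∑ l : Fin K, α ^ (i * l.1) • A l
        + ∑ l : Fin T, α ^ (i * (K + l.1)) • R l)
      = ∑ j ∈ Finset.range N, α ^ (i * j) • M j := by
    intro i
    rw [← Finset.sum_range_add_sum_Ico _ hKN.le, Finset.sum_Ico_eq_sum_range, hNK]
    congr 1
    · rw [← Fin.sum_univ_eq_sum_range (fun j => α ^ (i * j) • M j) K]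
      refine Finset.sum_congr rfl fun l hl => ?_
      have hlt := l.isLt
      congr 1; simp [hM, hlt, Nat.add_sub_cancel_left]
    · rw [← Fin.sum_univ_eq_sum_range (fun j => α ^ (i * (K + j)) • M (K + j)) T]
      refine Finset.sum_congr rfl fun l hl => ?_
      have hlt := l.isLt
      congr 1; simp [hM, hlt, Nat.add_sub_cancel_left]
  have hB : ∀ i, (∑ l : Fin K, α ^ (-(i : ℤ) * (l.1 : ℤ)) • B l
        + ∑ l : Fin T, α ^ (-(i : ℤ) * ((K + l.1 : ℕ) : ℤ)) • S l)
      = ∑ j ∈ Finset.range N, α ^ (-(i : ℤ) * (j : ℤ)) • Q j := by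
    intro i
    rw [← Finset.sum_range_add_sum_Ico _ hKN.le, Finset.sum_Ico_eq_sum_range, hNK]
    congr 1
    · rw [← Fin.sum_univ_eq_sum_range (fun j => α ^ (-(i : ℤ) * (j : ℤ)) • Q j) K]
      refine Finset.sum_congr rfl fun l hl => ?_
      have hlt := l.isLt
      congr 1; simp [hQ, hlt, Nat.add_sub_cancel_left]
    · rw [← Fin.sum_univ_eq_sum_range
        (fun j => α ^ (-(i : ℤ) * ((K + j : ℕ) : ℤ)) • Q (K + j)) T]
      refine Finset.sum_congr rfl fun l hl => ?_
      have hlt := l.isLt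
      congr 1; simp [hQ, hlt, Nat.add_sub_cancel_left]
  have hRHS : (∑ l : Fin K, A l * B l + ∑ l : Fin T, R l * S l)
      = ∑ j ∈ Finset.range N, M j * Q j := by
    rw [← Finset.sum_range_add_sum_Ico _ hKN.le, Finset.sum_Ico_eq_sum_range, hNK]
    congr 1
    · rw [← Fin.sum_univ_eq_sum_range (fun j => M j * Q j) K]
      refine Finset.sum_congr rfl fun l hl => ?_
      have hlt := l.isLt
      congr 1 <;> simp [hM, hQ, hlt, Nat.add_sub_cancel_left]
    · rw [← Fin.sum_univ_eq_sum_range (fun j => M (K + j) * Q (K + j)) T]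
      refine Finset.sum_congr rfl fun l hl => ?_
      have hlt := l.isLt
      congr 1 <;> simp [hM, hQ, hlt, Nat.add_sub_cancel_left]
  calc (N : F)⁻¹ • ∑ i ∈ Finset.range N,
        ((∑ l : Fin K, α ^ (i * l.1) • A l
            + ∑ l : Fin T, α ^ (i * (K + l.1)) • R l) *
         (∑ l : Fin K, α ^ (-(i : ℤ) * (l.1 : ℤ)) • B l
            + ∑ l : Fin T, α ^ (-(i : ℤ) * ((K + l.1 : ℕ) : ℤ)) • S l))
      = (N : F)⁻¹ • ∑ i ∈ Finset.range N,
          ∑ j ∈ Finset.range N, ∑ k ∈ Finset.range N,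
            (α ^ (i * j) * α ^ (-(i : ℤ) * (k : ℤ))) • (M j * Q k) := by
        congr 1
        refine Finset.sum_congr rfl fun i _ => ?_
        rw [hA i, hB i, Matrix.sum_mul]
        refine Finset.sum_congr rfl fun j _ => ?_
        rw [Matrix.mul_sum]
        refine Finset.sum_congr rfl fun k _ => ?_
        rw [Matrix.smul_mul, Matrix.mul_smul, smul_smul]
    _ = (N : F)⁻¹ • ∑ j ∈ Finset.range N, ∑ k ∈ Finset.range N,
          (∑ i ∈ Finset.range N, α ^ (i * j) * α ^ (-(i : ℤ) * (k : ℤ))) • (M j * Q k) := by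
        rw [Finset.sum_comm]
        congr 1
        refine Finset.sum_congr rfl fun j _ => ?_
        rw [Finset.sum_comm]
        refine Finset.sum_congr rfl fun k _ => ?_
        rw [Finset.sum_smul]
    _ = (N : F)⁻¹ • ∑ j ∈ Finset.range N, (N : F) • (M j * Q j) := by
        congr 1
        refine Finset.sum_congr rfl fun j hj => ?_
        rw [Finset.mem_range] at hj
        have : ∀ k ∈ Finset.range N,
            (∑ i ∈ Finset.range N, α ^ (i * j) * α ^ (-(i : ℤ) * (k : ℤ))) • (M j * Q k)
              = if j = k then (N : F) • (M j * Q k) else 0 := by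
          intro k hk
          rw [Finset.mem_range] at hk
          rw [sdmm_char_orth hN hα hj hk, ite_smul, zero_smul]
        rw [Finset.sum_congr rfl this, Finset.sum_ite_eq, if_pos (Finset.mem_range.mpr hj)]
    _ = ∑ l : Fin K, A l * B l + ∑ l : Fin T, R l * S l := by
        rw [hRHS, ← Finset.smul_sum, smul_smul, inv_mul_cancel₀ hNF, one_smul]
end

section
/- (Security against any T colluding servers.) Let F be a finite field, let N, T be positive integers with 2T < N and N dividing |F| − 1, set K = N − 2T, and let α ∈ F be a primitive N-th root of unity. Fix arbitrary matrices A_1, …, A_K ∈ F^{m×n'} and B_1, …, B_K ∈ F^{n'×p}, and fix a subset L ⊆ {1, …, N} with |L| = T. For keys R = (R_1, …, R_T) ∈ (F^{m×n'})^T and S = (S_1, …, S_T) ∈ (F^{n'×p})^T, define the shares [[A]]_i = ∑_{l=1}^{K} A_l α^{(i−1)(l−1)} + ∑_{l=1}^{T} R_l α^{(i−1)(K+l−1)} and [[B]]_i = ∑_{l=1}^{K} B_l α^{−(i−1)(l−1)} + ∑_{l=1}^{T} S_l α^{−(i−1)(K+T+l−1)}. Then the map (R, S) ↦ (([[A]]_i)_{i∈L},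 ([[B]]_i)_{i∈L}) is a bijection from (F^{m×n'})^T × (F^{n'×p})^T onto (F^{m×n'})^L × (F^{n'×p})^L. In particular, if R and S are chosen uniformly at random, the joint distribution of the 2T shares observed by the T servers in L is uniform and hence independent of the data matrices A_1, …, A_K, B_1, …, B_K. -/
/-- Key linear-algebra lemma: if `∑ l, (c i * x i ^ l) • R l = 0` for all `i` in an index
type of cardinality `T`, with `x` injective and `c` never zero, then all `R l` vanish. -/
lemma sdmm_key {F : Type*} [Field F] {a b T : ℕ} {ι : Type*} [Fintype ι]
    (hcard : Fintype.card ι = T) (x c : ι → F) (hx : Function.Injective x)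
    (hc : ∀ i, c i ≠ 0) (R : Fin T → Matrix (Fin a) (Fin b) F)
    (h : ∀ i : ι, ∑ l : Fin T, (c i * x i ^ (l : ℕ)) • R l = 0) :
    ∀ l, R l = 0 := by
  intro l
  ext u v
  have e : Fin T ≃ ι := (Fintype.equivFinOfCardEq hcard).symm
  have hzero : (fun l : Fin T => R l u v) = 0 := by
    apply Matrix.eq_zero_of_forall_index_sum_pow_mul_eq_zero
      (f := fun j : Fin T => x (e j)) (hx.comp e.injective)
    intro j
    have h1 : ∑ l : Fin T, (c (e j) * x (e j) ^ (l : ℕ)) * R l u v = 0 := by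
      have := congrArg (fun M => M u v) (h (e j))
      simpa [Matrix.sum_apply] using this
    have h2 : c (e j) * ∑ l : Fin T, x (e j) ^ (l : ℕ) * R l u v = 0 := by
      rw [Finset.mul_sum]
      simpa [mul_assoc] using h1
    rcases mul_eq_zero.mp h2 with h3 | h3
    · exact absurd h3 (hc _)
    · exact h3
  simpa using congrFun hzero l

/-- Security against any `T` colluding servers in the `(N, N-2T, T)` SDMM scheme:
for fixed data matrices `A_1,…,A_K`, `B_1,…,B_K` and any set `L` of `T` servers, the
map taking the key matrices `(R, S)` to the `2T` shares observed by the servers in `L`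
is a bijection; hence uniformly random keys make these shares uniform and independent
of the data. Server `i ∈ {1,…,N}` of the paper corresponds to `i-1 ∈ Fin N` here. -/
theorem sdmm_shares_bijective_of_colluding {F : Type*} [Field F] [Fintype F]
    {m n' p : ℕ} (N T K : ℕ) (hT : 0 < T) (h2T : 2 * T < N) (hK : K = N - 2 * T)
    (hdvd : N ∣ Fintype.card F - 1) (α : F) (hα : IsPrimitiveRoot α N)
    (A : Fin K → Matrix (Fin m) (Fin n') F) (B : Fin K → Matrix (Fin n') (Fin p) F)
    (L : Finset (Fin N)) (hL : L.card = T) :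
    Function.Bijective
      (fun RS : (Fin T → Matrix (Fin m) (Fin n') F) × (Fin T → Matrix (Fin n') (Fin p) F) =>
        ((fun i : L => ∑ l : Fin K, α ^ ((i.1 : ℕ) * l.1) • A l
              + ∑ l : Fin T, α ^ ((i.1 : ℕ) * (K + l.1)) • RS.1 l,
          fun i : L => ∑ l : Fin K, α ^ (-((i.1 : ℕ) : ℤ) * (l.1 : ℤ)) • B l
              + ∑ l : Fin T, α ^ (-((i.1 : ℕ) : ℤ) * ((K + T + l.1 : ℕ) : ℤ)) • RS.2 l) :
          (L → Matrix (Fin m) (Fin n') F) × (L → Matrix (Fin n') (Fin p) F))) := by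
  have hN : 0 < N := lt_of_le_of_lt (Nat.zero_le _) h2T
  have hα0 : α ≠ 0 := hα.ne_zero hN.ne'
  have hcardL : Fintype.card L = T := by simp [hL]
  rw [Fintype.bijective_iff_injective_and_card]
  constructor
  · intro RS RS' hEq
    have h1 := congrArg Prod.fst hEq
    have h2 := congrArg Prod.snd hEq
    simp only at h1 h2
    have hR : ∀ l, RS.1 l - RS'.1 l = 0 := by
      apply sdmm_key hcardL (fun i : L => α ^ (i.1 : ℕ)) (fun i : L => α ^ ((i.1 : ℕ) * K))
      · intro i j hij
        exact Subtype.ext (Fin.ext (hα.pow_inj i.1.2 j.1.2 hij))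
      · intro i; exact pow_ne_zero _ hα0
      · intro i
        have hi := congrFun h1 i
        have : ∑ l : Fin T, α ^ ((i.1 : ℕ) * (K + l.1)) • (RS.1 l - RS'.1 l) = 0 := by
          simp only [smul_sub, Finset.sum_sub_distrib]
          rw [sub_eq_zero]
          have := add_left_cancel hi
          exact this
        calc ∑ l : Fin T, (α ^ ((i.1 : ℕ) * K) * (α ^ (i.1 : ℕ)) ^ (l : ℕ)) • (RS.1 l - RS'.1 l)
            = ∑ l : Fin T, α ^ ((i.1 : ℕ) * (K + l.1)) • (RS.1 l - RS'.1 l) := by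
              apply Finset.sum_congr rfl
              intro l _
              congr 1
              rw [Nat.mul_add, pow_add, ← pow_mul]
          _ = 0 := this
    have hS : ∀ l, RS.2 l - RS'.2 l = 0 := by
      apply sdmm_key hcardL (fun i : L => α⁻¹ ^ (i.1 : ℕ))
        (fun i : L => α⁻¹ ^ ((i.1 : ℕ) * (K + T)))
      · intro i j hij
        exact Subtype.ext (Fin.ext (hα.inv.pow_inj i.1.2 j.1.2 hij))
      · intro i; exact pow_ne_zero _ (inv_ne_zero hα0)
      · intro i
        have hi := congrFun h2 i
        have key : ∀ l : Fin T, α ^ (-((i.1 : ℕ) : ℤ) * ((K + T + l.1 : ℕ) : ℤ))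
            = α⁻¹ ^ ((i.1 : ℕ) * (K + T)) * (α⁻¹ ^ (i.1 : ℕ)) ^ (l : ℕ) := by
          intro l
          rw [← pow_mul, ← pow_add, inv_pow, ← zpow_natCast α, ← zpow_neg]
          congr 1
          push_cast
          ring
        have : ∑ l : Fin T,
            α ^ (-((i.1 : ℕ) : ℤ) * ((K + T + l.1 : ℕ) : ℤ)) • (RS.2 l - RS'.2 l) = 0 := by
          simp only [smul_sub, Finset.sum_sub_distrib]
          rw [sub_eq_zero]
          exact add_left_cancel hi
        calc ∑ l : Fin T, (α⁻¹ ^ ((i.1 : ℕ) * (K + T)) * (α⁻¹ ^ (i.1 : ℕ)) ^ (l : ℕ))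
              • (RS.2 l - RS'.2 l)
            = ∑ l : Fin T,
              α ^ (-((i.1 : ℕ) : ℤ) * ((K + T + l.1 : ℕ) : ℤ)) • (RS.2 l - RS'.2 l) := by
              apply Finset.sum_congr rfl
              intro l _
              rw [key l]
          _ = 0 := this
    have : RS.1 = RS'.1 := funext fun l => sub_eq_zero.mp (hR l)
    have : RS.2 = RS'.2 := funext fun l => sub_eq_zero.mp (hS l)
    exact Prod.ext ‹RS.1 = RS'.1› ‹RS.2 = RS'.2›
  · simp [Fintype.card_prod, Fintype.card_fun, hcardL, hL]
end

section
/- (Correctness of the straggler-mitigation scheme: averaging over the first variable.) Let F be a field, let K_1, K_2, K_3, T be positive integers, set N_1 = K_1 + 2T, assume N_1·1_F ≠ 0 in F, and let α ∈ F be a primitive N_1-th root of unity. Let A_{i,j} (i ∈ [K_2], j ∈ [K_1]) and R_{i,j} (i ∈ [K_2], j ∈ [T]) be matrices over F of equal size m'×n', and let B_{j,k} (j ∈ [K_1], k ∈ [K_3]) and S_{j,k} (j ∈ [T], k ∈ [K_3]) be matrices over F of size n'×p'. Define the bivariate matrix polynomials A(x_1, x_2) = ∑_{i=1}^{K_2}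 ∑_{j=1}^{K_1} A_{i,j} x_2^{i−1} x_1^{j−1} + ∑_{i=1}^{K_2} ∑_{j=1}^{T} R_{i,j} x_2^{i−1} x_1^{K_1+j−1} and B(x_1, x_2) = ∑_{j=1}^{K_1} ∑_{k=1}^{K_3} B_{j,k} x_1^{−(j−1)} x_2^{(k−1)K_2} + ∑_{j=1}^{T} ∑_{k=1}^{K_3} S_{j,k} x_1^{−(K_1+T+j−1)} x_2^{(k−1)K_2}. Then for every β ∈ F, (1/N_1) · ∑_{r=0}^{N_1−1} A(α^r, β) · B(α^r, β) = ∑_{i=1}^{K_2} ∑_{k=1}^{K_3} ( ∑_{j=1}^{K_1} A_{i,j} B_{j,k} ) β^{K_2(k−1)+i−1}. -/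
private lemma sumswap4 {F M : Type*} [Semiring F] [AddCommMonoid M] [Module F M]
    {ι₁ ι₂ ι₃ ι₄ : Type*} [Fintype ι₁] [Fintype ι₂] [Fintype ι₃] [Fintype ι₄]
    (n : ℕ) (c : ℕ → ι₁ → ι₂ → ι₃ → ι₄ → F) (f : ι₁ → ι₂ → ι₃ → ι₄ → M) :
    ∑ r ∈ Finset.range n, ∑ a, ∑ b, ∑ u, ∑ v, c r a b u v • f a b u v
      = ∑ a, ∑ b, ∑ u, ∑ v, (∑ r ∈ Finset.range n, c r a b u v) • f a b u v := by
  rw [Finset.sum_comm]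
  refine Finset.sum_congr rfl fun a _ => ?_
  rw [Finset.sum_comm]
  refine Finset.sum_congr rfl fun b _ => ?_
  rw [Finset.sum_comm]
  refine Finset.sum_congr rfl fun u _ => ?_
  rw [Finset.sum_comm]
  refine Finset.sum_congr rfl fun v _ => ?_
  rw [Finset.sum_smul]

private lemma reorder3 {M : Type*} [AddCommMonoid M] {ι₁ ι₂ ι₃ : Type*}
    [Fintype ι₁] [Fintype ι₂] [Fintype ι₃] (g : ι₁ → ι₂ → ι₃ → M) :
    ∑ a, ∑ b, ∑ c, g a b c = ∑ c, ∑ b, ∑ a, g a b c :=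
  calc ∑ a, ∑ b, ∑ c, g a b c
      = ∑ b, ∑ a, ∑ c, g a b c := Finset.sum_comm
    _ = ∑ b, ∑ c, ∑ a, g a b c := Finset.sum_congr rfl fun b _ => Finset.sum_comm
    _ = ∑ c, ∑ b, ∑ a, g a b c := Finset.sum_comm



set_option maxHeartbeats 1000000

/-- Correctness of the straggler-mitigation scheme (averaging over the first
variable): for a group of `N_1 = K_1 + 2T` servers evaluating the bivariate
encodings at `(α^r, β)`, `r = 0,…,N_1-1`, the average of the products equals the
evaluation at `β` of the polynomial whose coefficients are the block products
`∑_j A_{i,j} B_{j,k}`. Indices `i,j,k` are 0-based here (1-based in the paper). -/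
theorem straggler_group_average_correct {F : Type*} [Field F] {m' n' p' : ℕ}
    (K1 K2 K3 T : ℕ) (hK1 : 0 < K1) (hK2 : 0 < K2) (hK3 : 0 < K3) (hT : 0 < T)
    (N1 : ℕ) (hN1 : N1 = K1 + 2 * T) (hNF : (N1 : F) ≠ 0)
    (α : F) (hα : IsPrimitiveRoot α N1)
    (A : Fin K2 → Fin K1 → Matrix (Fin m') (Fin n') F)
    (R : Fin K2 → Fin T → Matrix (Fin m') (Fin n') F)
    (B : Fin K1 → Fin K3 → Matrix (Fin n') (Fin p') F)
    (S : Fin T → Fin K3 → Matrix (Fin n') (Fin p') F) (β : F) :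
    (N1 : F)⁻¹ • ∑ r ∈ Finset.range N1,
        ((∑ i : Fin K2, ∑ j : Fin K1, (β ^ i.1 * α ^ (r * j.1)) • A i j
            + ∑ i : Fin K2, ∑ j : Fin T, (β ^ i.1 * α ^ (r * (K1 + j.1))) • R i j) *
         (∑ j : Fin K1, ∑ k : Fin K3,
              (α ^ (-(r : ℤ) * (j.1 : ℤ)) * β ^ (k.1 * K2)) • B j k
            + ∑ j : Fin T, ∑ k : Fin K3,
              (α ^ (-(r : ℤ) * ((K1 + T + j.1 : ℕ) : ℤ)) * β ^ (k.1 * K2)) • S j k))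
      = ∑ i : Fin K2, ∑ k : Fin K3,
          β ^ (K2 * k.1 + i.1) • (∑ j : Fin K1, A i j * B j k) := by
  have hN1pos : 0 < N1 := by omega
  have hα0 : α ≠ 0 := hα.ne_zero hN1pos.ne'
  -- sum of powers of a root of unity
  have key : ∀ d : ℤ, ∑ r ∈ Finset.range N1, α ^ ((r : ℤ) * d)
      = if (N1:ℤ) ∣ d then (N1:F) else 0 := by
    intro d
    have hz : ∀ r : ℕ, α ^ ((r:ℤ) * d) = (α ^ d) ^ r := by
      intro r; rw [mul_comm, zpow_mul, zpow_natCast]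
    simp_rw [hz]
    by_cases hdvd : (N1:ℤ) ∣ d
    · rw [if_pos hdvd]
      obtain ⟨c, rfl⟩ := hdvd
      have h1 : α ^ ((N1:ℤ) * c) = 1 := by
        rw [zpow_mul, zpow_natCast, hα.pow_eq_one, one_zpow]
      simp [h1]
    · rw [if_neg hdvd]
      have h1 : α ^ d ≠ 1 := fun h => hdvd ((hα.zpow_eq_one_iff_dvd d).mp h)
      rw [geom_sum_eq h1]
      have h2 : (α ^ d) ^ N1 = 1 := by
        rw [← zpow_natCast, ← zpow_mul, mul_comm, zpow_mul, zpow_natCast,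
          hα.pow_eq_one, one_zpow]
      simp [h2]
  -- non-divisibility helper
  have hnd : ∀ d : ℤ, d ≠ 0 → -(N1:ℤ) < d → d < N1 → ¬ (N1:ℤ) ∣ d := by
    intro d hd0 hlo hhi hdvd
    rcases lt_or_gt_of_ne hd0 with h | h
    · have := Int.le_of_dvd (by omega : (0:ℤ) < -d) (dvd_neg.mpr hdvd); omega
    · have := Int.le_of_dvd h hdvd; omega
  -- the scalar sum over one group of servers
  have hsum : ∀ (a b : ℕ) (c1 c2 : F),
      (∑ r ∈ Finset.range N1,
          (N1:F)⁻¹ * (α ^ (-(r:ℤ) * (b:ℤ)) * c1 * (c2 * α ^ (r * a))))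
        = if (N1:ℤ) ∣ ((a:ℤ) - (b:ℤ)) then c1 * c2 else 0 := by
    intro a b c1 c2
    have step : ∀ r ∈ Finset.range N1,
        (N1:F)⁻¹ * (α ^ (-(r:ℤ) * (b:ℤ)) * c1 * (c2 * α ^ (r * a)))
          = ((N1:F)⁻¹ * c1 * c2) * α ^ ((r:ℤ) * ((a:ℤ) - (b:ℤ))) := by
      intro r _
      have hmerge : α ^ (r * a) * α ^ (-(r:ℤ) * (b:ℤ))
          = α ^ ((r:ℤ) * ((a:ℤ) - (b:ℤ))) := by
        rw [← zpow_natCast α (r * a), ← zpow_add₀ hα0]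
        congr 1; push_cast; ring
      rw [← hmerge]; ring
    rw [Finset.sum_congr rfl step, ← Finset.mul_sum, key]
    split
    · field_simp
    · rw [mul_zero]
  clear key
  simp only [Matrix.add_mul, Matrix.mul_add, Matrix.sum_mul, Matrix.mul_sum,
    Matrix.smul_mul, Matrix.mul_smul, smul_smul, smul_add, Finset.smul_sum,
    Finset.sum_add_distrib]
  rw [sumswap4, sumswap4, sumswap4, sumswap4]
  simp_rw [hsum]
  -- kill the three cross terms
  have hz2 : ∀ (x1 : Fin K1) (x4 : Fin T) (c : F),
      (if (N1:ℤ) ∣ (((K1 + ↑x4 : ℕ) : ℤ) - ((↑x1 : ℕ) : ℤ)) then c else 0) = 0 := by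
    intro x1 x4 c
    exact if_neg (hnd _ (by have := x1.isLt; have := x4.isLt; omega)
      (by have := x1.isLt; have := x4.isLt; omega)
      (by have := x1.isLt; have := x4.isLt; omega))
  have hz3 : ∀ (x1 : Fin T) (x4 : Fin K1) (c : F),
      (if (N1:ℤ) ∣ (((↑x4 : ℕ) : ℤ) - ((K1 + T + ↑x1 : ℕ) : ℤ)) then c else 0) = 0 := by
    intro x1 x4 c
    exact if_neg (hnd _ (by have := x1.isLt; have := x4.isLt; omega)
      (by have := x1.isLt; have := x4.isLt; omega)
      (by have := x1.isLt; have := x4.isLt; omega))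
  have hz4 : ∀ (x1 : Fin T) (x4 : Fin T) (c : F),
      (if (N1:ℤ) ∣ (((K1 + ↑x4 : ℕ) : ℤ) - ((K1 + T + ↑x1 : ℕ) : ℤ)) then c else 0) = 0 := by
    intro x1 x4 c
    exact if_neg (hnd _ (by have := x1.isLt; have := x4.isLt; omega)
      (by have := x1.isLt; have := x4.isLt; omega)
      (by have := x1.isLt; have := x4.isLt; omega))
  have heq : ∀ (x1 x4 : Fin K1) (c : F),
      (if (N1:ℤ) ∣ (((↑x4 : ℕ) : ℤ) - ((↑x1 : ℕ) : ℤ)) then c else 0)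
        = if x4 = x1 then c else 0 := by
    intro x1 x4 c
    by_cases h : x4 = x1
    · subst h; simp
    · rw [if_neg h, if_neg]
      refine hnd _ ?_ ?_ ?_
      · have : (x4:ℕ) ≠ (x1:ℕ) := fun hh => h (Fin.ext hh)
        omega
      · have := x1.isLt; have := x4.isLt; omega
      · have := x1.isLt; have := x4.isLt; omega
  simp_rw [hz2, hz3, hz4, heq, ite_smul, zero_smul, Finset.sum_const_zero,
    add_zero, Finset.sum_ite_eq', Finset.mem_univ, if_true]
  rw [reorder3]
  refine Finset.sum_congr rfl fun i _ => Finset.sum_congr rfl fun k _ =>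
    Finset.sum_congr rfl fun j _ => ?_
  rw [pow_add, mul_comm K2 (k:ℕ)]
end

section
/- (Correctness of the secure re-sharing/communication phase.) Let F be a field, let N be a positive integer with N·1_F ≠ 0 in F, and let α ∈ F be a primitive N-th root of unity. Let C, D_1, …, D_{N−1} be m×p' matrices over F and define H_i = C + ∑_{s=1}^{N−1} D_s α^{(i−1)s} for i ∈ {1, …, N}. Let K', T' be positive integers with K' + T' ≤ N, let each m×p' matrix M be partitioned column-wise into K' equal blocks M^{(1)}, …, M^{(K')} (assuming K' divides p'), and for each server i let R^{(i)}_1, …, R^{(i)}_{T'} be arbitrary m×(p'/K') key matrices over F. Define V_{i,j} = ∑_{l=1}^{K'} H_i^{(l)} α^{(j−1)(l−1)} + ∑_{l=1}^{T'} R^{(i)}_l α^{(j−1)(K'+l−1)}. Then for every j ∈ {1, …, N}, (1/N) · ∑_{i=1}^{N} V_{i,j} = ∑_{l=1}^{K'} C^{(l)} α^{(j−1)(l−1)} + ∑_{l=1}^{T'} R̄_l α^{(j−1)(K'+l−1)}, where R̄_l = (1/N) ∑_{i=1}^{N} R^{(i)}_l. That is, after each server i sends to server j a left-share of its own value H_i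 and server j averages what it receives, server j holds a valid (N, K', T') left-share of C with key matrices R̄_1, …, R̄_{T'}. -/
/-- The `l`-th block of the column-wise partition of an `m × (K·b)` matrix into `K`
equal blocks of size `m × b`. -/
def colBlock {F : Type*} {m b : ℕ} (K : ℕ) (M : Matrix (Fin m) (Fin (K * b)) F)
    (l : Fin K) : Matrix (Fin m) (Fin b) F :=
  Matrix.of fun r c => M r ⟨l.1 * b + c.1, by
    calc l.1 * b + c.1 < l.1 * b + b := Nat.add_lt_add_left c.isLt _
      _ = (l.1 + 1) * b := by ring
      _ ≤ K * b := Nat.mul_le_mul_right _ l.isLt⟩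

lemma colBlock_add {F : Type*} [Field F] {m b : ℕ} (K : ℕ)
    (A B : Matrix (Fin m) (Fin (K * b)) F) (l : Fin K) :
    colBlock K (A + B) l = colBlock K A l + colBlock K B l := by
  ext r c; simp [colBlock]

lemma colBlock_smul {F : Type*} [Field F] {m b : ℕ} (K : ℕ) (c : F)
    (A : Matrix (Fin m) (Fin (K * b)) F) (l : Fin K) :
    colBlock K (c • A) l = c • colBlock K A l := by
  ext r cc; simp [colBlock]

lemma colBlock_sum {F : Type*} [Field F] {m b : ℕ} (K : ℕ) {ι : Type*} (s : Finset ι)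
    (A : ι → Matrix (Fin m) (Fin (K * b)) F) (l : Fin K) :
    colBlock K (∑ i ∈ s, A i) l = ∑ i ∈ s, colBlock K (A i) l := by
  ext r c; simp [colBlock, Matrix.sum_apply]

/-- Correctness of the secure re-sharing/communication phase: if server `i` holds
`H_i = C + ∑_{s=1}^{N-1} D_s α^{(i-1)s}` and sends to server `j` an `(N, K', T')`
left-share `V_{i,j}` of `H_i` with its own keys `Rk^{(i)}`, then the average of the
shares received by server `j` is a valid `(N, K', T')` left-share of `C` with key
matrices `R̄_l = (1/N) ∑_i Rk^{(i)}_l`. Servers are indexed `0,…,N-1` here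
(`1,…,N` in the paper), and the column width is `p' = K'·b`. -/
theorem resharing_phase_correct {F : Type*} [Field F] {m b : ℕ}
    (N : ℕ) (hN : 0 < N) (hNF : (N : F) ≠ 0) (α : F) (hα : IsPrimitiveRoot α N)
    (K' T' : ℕ) (hK' : 0 < K') (hT' : 0 < T') (hKT : K' + T' ≤ N)
    (C : Matrix (Fin m) (Fin (K' * b)) F)
    (D : ℕ → Matrix (Fin m) (Fin (K' * b)) F)
    (Rk : ℕ → Fin T' → Matrix (Fin m) (Fin b) F)
    (H : ℕ → Matrix (Fin m) (Fin (K' * b)) F)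
    (hH : ∀ i, H i = C + ∑ s ∈ Finset.range (N - 1), α ^ (i * (s + 1)) • D s)
    (V : ℕ → ℕ → Matrix (Fin m) (Fin b) F)
    (hV : ∀ i j, V i j = ∑ l : Fin K', α ^ (j * l.1) • colBlock K' (H i) l
        + ∑ l : Fin T', α ^ (j * (K' + l.1)) • Rk i l) :
    ∀ j, (N : F)⁻¹ • ∑ i ∈ Finset.range N, V i j
        = ∑ l : Fin K', α ^ (j * l.1) • colBlock K' C l
          + ∑ l : Fin T', α ^ (j * (K' + l.1)) •
              ((N : F)⁻¹ • ∑ i ∈ Finset.range N, Rk i l) := by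
  intro j
  have hcoef : ∀ s ∈ Finset.range (N - 1),
      ∑ i ∈ Finset.range N, α ^ (i * (s + 1)) = 0 := by
    intro s hs
    rw [Finset.mem_range] at hs
    have hx1 : α ^ (s + 1) ≠ 1 :=
      hα.pow_ne_one_of_pos_of_lt (Nat.succ_ne_zero s) (by omega)
    have hxN : (α ^ (s + 1)) ^ N = 1 := by
      rw [← pow_mul, mul_comm, pow_mul, hα.pow_eq_one, one_pow]
    calc ∑ i ∈ Finset.range N, α ^ (i * (s + 1))
        = ∑ i ∈ Finset.range N, (α ^ (s + 1)) ^ i := by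
          refine Finset.sum_congr rfl fun i _ => ?_
          rw [← pow_mul, mul_comm]
      _ = ((α ^ (s + 1)) ^ N - 1) / (α ^ (s + 1) - 1) := geom_sum_eq hx1 N
      _ = 0 := by rw [hxN, sub_self, zero_div]
  have hsum : ∑ i ∈ Finset.range N, H i = (N : F) • C := by
    simp only [hH, Finset.sum_add_distrib, Finset.sum_const, Finset.card_range]
    rw [Finset.sum_comm]
    have : ∀ s ∈ Finset.range (N - 1),
        ∑ i ∈ Finset.range N, α ^ (i * (s + 1)) • D s = 0 := by
      intro s hs
      rw [← Finset.sum_smul, hcoef s hs, zero_smul]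
    rw [Finset.sum_congr rfl this, Finset.sum_const, smul_zero, add_zero,
      ← Nat.cast_smul_eq_nsmul F]
  simp only [hV, Finset.sum_add_distrib]
  rw [smul_add]
  congr 1
  · rw [Finset.sum_comm]
    have : ∀ l : Fin K', ∑ i ∈ Finset.range N, α ^ (j * l.1) • colBlock K' (H i) l
        = α ^ (j * l.1) • colBlock K' ((N : F) • C) l := by
      intro l
      rw [← Finset.smul_sum, ← colBlock_sum, hsum]
    rw [Finset.sum_congr rfl fun l _ => this l]
    simp only [colBlock_smul]
    rw [Finset.smul_sum]
    refine Finset.sum_congr rfl fun l _ => ?_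
    rw [smul_comm, inv_smul_smul₀ hNF]
  · rw [Finset.sum_comm, Finset.smul_sum]
    refine Finset.sum_congr rfl fun l _ => ?_
    rw [← Finset.smul_sum, smul_comm]
end

section
/- (Correctness of the secure matrix transpose procedure.) Let F be a field, let N be a positive integer with N·1_F ≠ 0 in F, and let α ∈ F be a primitive N-th root of unity. Let K_1, T_1 be positive integers with K_1 + T_1 ≤ N, let A_1, …, A_{K_1} and R_1, …, R_{T_1} be m×n' matrices over F, and let L_i = ∑_{l=1}^{K_1} A_l α^{(i−1)(l−1)} + ∑_{l=1}^{T_1} R_l α^{(i−1)(K_1+l−1)} for i ∈ {1, …, N}. Then L_i^{tr} = ∑_{l=1}^{K_1} A_l^{tr} α^{(i−1)(l−1)} + ∑_{l=1}^{T_1} R_l^{tr} α^{(i−1)(K_1+l−1)}. Moreover, let K_2, T_2 be positive integers, suppose K_2 divides m, partition each n'×m matrix column-wise into K_2 equal blocks, let each server i hold arbitrary n'×(m/K_2) key matrices S^{(i)}_1, …, S^{(i)}_{T_2}, and define W_{i,j} = ∑_{l'=1}^{K_2} (L_i^{tr})^{(l')} α^{(j−1)(l'−1)} + ∑_{l'=1}^{T_2}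 S^{(i)}_{l'} α^{(j−1)(K_2+l'−1)}. Then for every l ∈ {1, …, K_1} and j ∈ {1, …, N}, (1/N) ∑_{i=1}^{N} W_{i,j} · α^{−(i−1)(l−1)} = ∑_{l'=1}^{K_2} (A_l^{tr})^{(l')} α^{(j−1)(l'−1)} + ∑_{l'=1}^{T_2} S̄_{l,l'} α^{(j−1)(K_2+l'−1)}, where S̄_{l,l'} = (1/N) ∑_{i=1}^{N} S^{(i)}_{l'} α^{−(i−1)(l−1)}; that is, server j ends up with valid (N, K_2, T_2) left-shares of each row-wise partition A_l^{tr} of A^{tr}. -/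
open Matrix

lemma orth_aux {F : Type*} [Field F] {N : ℕ} (hN : 0 < N) {α : F}
    (hα : IsPrimitiveRoot α N) {k l : ℕ} (hk : k < N) (hl : l < N) :
    ∑ i ∈ Finset.range N, α ^ (-(i : ℤ) * (l : ℤ)) * α ^ (i * k)
      = if k = l then (N : F) else 0 := by
  have hα0 : α ≠ 0 := hα.ne_zero hN.ne'
  have hterm : ∀ i : ℕ, α ^ (-(i : ℤ) * (l : ℤ)) * α ^ (i * k)
      = (α ^ k * (α ^ l)⁻¹) ^ i := by
    intro i
    rw [mul_pow, ← inv_pow, ← pow_mul, ← pow_mul,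
      show (-(i : ℤ) * (l : ℤ)) = -(((i * l : ℕ) : ℤ)) by push_cast; ring,
      _root_.zpow_neg, zpow_natCast]
    ring
  simp only [hterm]
  by_cases hkl : k = l
  · subst hkl
    simp [mul_inv_cancel₀ (pow_ne_zero _ hα0)]
  · rw [if_neg hkl]
    have hx1 : α ^ k * (α ^ l)⁻¹ ≠ 1 := by
      intro h
      apply hkl
      apply hα.pow_inj hk hl
      field_simp at h
      exact h
    have hxN : (α ^ k * (α ^ l)⁻¹) ^ N = 1 := by
      rw [mul_pow, ← pow_mul, inv_pow, ← pow_mul, mul_comm k N, mul_comm l N,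
        pow_mul, pow_mul, hα.pow_eq_one, one_pow, one_pow, inv_one, mul_one]
    have h := geom_sum_mul (α ^ k * (α ^ l)⁻¹) N
    rw [hxN, sub_self] at h
    rcases mul_eq_zero.mp h with h | h
    · exact h
    · exact absurd (sub_eq_zero.mp h) hx1

lemma inner_matrix {F : Type*} [Field F] {m n : ℕ} {N K1 T1 : ℕ} (hN : 0 < N) {α : F}
    (hα : IsPrimitiveRoot α N) (hK1T1 : K1 + T1 ≤ N) (hT1 : 0 < T1)
    (X : Fin K1 → Matrix (Fin m) (Fin n) F) (Y : Fin T1 → Matrix (Fin m) (Fin n) F)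
    (l : Fin K1) :
    ∑ i ∈ Finset.range N, α ^ (-(i : ℤ) * (l.1 : ℤ)) •
      (∑ k : Fin K1, α ^ (i * k.1) • X k + ∑ k : Fin T1, α ^ (i * (K1 + k.1)) • Y k)
    = (N : F) • X l := by
  have hl : l.1 < N := lt_of_lt_of_le (lt_of_lt_of_le l.isLt (Nat.le_add_right K1 T1)) hK1T1
  have h1 : ∑ i ∈ Finset.range N, ∑ k : Fin K1,
      α ^ (-(i : ℤ) * (l.1 : ℤ)) • (α ^ (i * k.1) • X k) = (N : F) • X l := by
    rw [Finset.sum_comm]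
    have hk' : ∀ k : Fin K1, ∑ i ∈ Finset.range N,
        α ^ (-(i : ℤ) * (l.1 : ℤ)) • (α ^ (i * k.1) • X k)
        = (if k = l then (N : F) else 0) • X k := by
      intro k
      have hkN : k.1 < N := lt_of_lt_of_le (lt_of_lt_of_le k.isLt (Nat.le_add_right K1 T1)) hK1T1
      simp only [smul_smul]
      rw [← Finset.sum_smul, orth_aux hN hα hkN hl]
      congr 1
      simp [Fin.val_eq_val]
    rw [Finset.sum_congr rfl fun k _ => hk' k]
    simp [ite_smul]
  have h2 : ∑ i ∈ Finset.range N, ∑ k : Fin T1,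
      α ^ (-(i : ℤ) * (l.1 : ℤ)) • (α ^ (i * (K1 + k.1)) • Y k) = 0 := by
    rw [Finset.sum_comm]
    refine Finset.sum_eq_zero fun k _ => ?_
    have hkN : K1 + k.1 < N := lt_of_lt_of_le (Nat.add_lt_add_left k.isLt K1) hK1T1
    simp only [smul_smul]
    rw [← Finset.sum_smul, orth_aux hN hα hkN hl, if_neg, zero_smul]
    have := l.isLt
    omega
  calc ∑ i ∈ Finset.range N, α ^ (-(i : ℤ) * (l.1 : ℤ)) •
      (∑ k : Fin K1, α ^ (i * k.1) • X k + ∑ k : Fin T1, α ^ (i * (K1 + k.1)) • Y k)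
      = (∑ i ∈ Finset.range N, ∑ k : Fin K1,
          α ^ (-(i : ℤ) * (l.1 : ℤ)) • (α ^ (i * k.1) • X k))
        + ∑ i ∈ Finset.range N, ∑ k : Fin T1,
          α ^ (-(i : ℤ) * (l.1 : ℤ)) • (α ^ (i * (K1 + k.1)) • Y k) := by
        simp only [smul_add, Finset.sum_add_distrib, Finset.smul_sum]
    _ = (N : F) • X l := by rw [h1, h2, add_zero]

/-- Correctness of the secure matrix transpose procedure (Section VI-C of the paper):
(1) transposing an `(N, K_1, T_1)` left-share of `A` entrywise gives the analogous
encoding of the transposed partitions `A_lᵀ` and keys `R_lᵀ`; (2) after one round of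
re-sharing and an inverse DFT, server `j` holds valid `(N, K_2, T_2)` left-shares of
each row-wise partition `A_lᵀ` of `Aᵀ`, with keys
`S̄_{l,l'} = (1/N) ∑_i S^{(i)}_{l'} α^{-(i-1)(l-1)}`. Servers and blocks are
0-indexed here; the matrices `A_l` have `m = K_2·b` rows. -/
theorem secure_transpose_correct {F : Type*} [Field F] {b n' : ℕ}
    (N : ℕ) (hN : 0 < N) (hNF : (N : F) ≠ 0) (α : F) (hα : IsPrimitiveRoot α N)
    (K1 T1 : ℕ) (hK1 : 0 < K1) (hT1 : 0 < T1) (hK1T1 : K1 + T1 ≤ N)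
    (K2 T2 : ℕ) (hK2 : 0 < K2) (hT2 : 0 < T2)
    (A : Fin K1 → Matrix (Fin (K2 * b)) (Fin n') F)
    (R : Fin T1 → Matrix (Fin (K2 * b)) (Fin n') F)
    (L : ℕ → Matrix (Fin (K2 * b)) (Fin n') F)
    (hL : ∀ i, L i = ∑ l : Fin K1, α ^ (i * l.1) • A l
        + ∑ l : Fin T1, α ^ (i * (K1 + l.1)) • R l)
    (S : ℕ → Fin T2 → Matrix (Fin n') (Fin b) F)
    (W : ℕ → ℕ → Matrix (Fin n') (Fin b) F)
    (hW : ∀ i j, W i j = ∑ l' : Fin K2, α ^ (j * l'.1) • colBlock K2 (L i)ᵀ l'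
        + ∑ l' : Fin T2, α ^ (j * (K2 + l'.1)) • S i l') :
    (∀ i, (L i)ᵀ = ∑ l : Fin K1, α ^ (i * l.1) • (A l)ᵀ
        + ∑ l : Fin T1, α ^ (i * (K1 + l.1)) • (R l)ᵀ) ∧
    (∀ (l : Fin K1) (j : ℕ),
      (N : F)⁻¹ • ∑ i ∈ Finset.range N, α ^ (-(i : ℤ) * (l.1 : ℤ)) • W i j
        = ∑ l' : Fin K2, α ^ (j * l'.1) • colBlock K2 (A l)ᵀ l'
          + ∑ l' : Fin T2, α ^ (j * (K2 + l'.1)) •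
              ((N : F)⁻¹ • ∑ i ∈ Finset.range N, α ^ (-(i : ℤ) * (l.1 : ℤ)) • S i l')) := by
  have hcol : ∀ (i : ℕ) (l' : Fin K2), colBlock K2 (L i)ᵀ l'
      = ∑ k : Fin K1, α ^ (i * k.1) • colBlock K2 (A k)ᵀ l'
        + ∑ k : Fin T1, α ^ (i * (K1 + k.1)) • colBlock K2 (R k)ᵀ l' := by
    intro i l'
    ext r c
    rw [hL]
    simp [colBlock, Matrix.sum_apply]
  constructor
  · intro i
    rw [hL]
    simp [Matrix.transpose_add, Matrix.transpose_sum, Matrix.transpose_smul]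
  · intro l j
    simp only [hW]
    have hP : ∑ i ∈ Finset.range N, α ^ (-(i : ℤ) * (l.1 : ℤ)) •
        (∑ l' : Fin K2, α ^ (j * l'.1) • colBlock K2 (L i)ᵀ l')
        = ∑ l' : Fin K2, α ^ (j * l'.1) • ((N : F) • colBlock K2 (A l)ᵀ l') := by
      simp only [Finset.smul_sum]
      rw [Finset.sum_comm]
      refine Finset.sum_congr rfl fun l' _ => ?_
      rw [show (∑ i ∈ Finset.range N, α ^ (-(i : ℤ) * (l.1 : ℤ)) •
          (α ^ (j * l'.1) • colBlock K2 (L i)ᵀ l'))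
          = α ^ (j * l'.1) • ∑ i ∈ Finset.range N,
              α ^ (-(i : ℤ) * (l.1 : ℤ)) • colBlock K2 (L i)ᵀ l' from by
        rw [Finset.smul_sum]
        exact Finset.sum_congr rfl fun i _ => smul_comm _ _ _]
      congr 1
      simp only [hcol]
      exact inner_matrix hN hα hK1T1 hT1 _ _ l
    have hQ : ∑ i ∈ Finset.range N, α ^ (-(i : ℤ) * (l.1 : ℤ)) •
        (∑ l' : Fin T2, α ^ (j * (K2 + l'.1)) • S i l')
        = ∑ l' : Fin T2, α ^ (j * (K2 + l'.1)) •
            (∑ i ∈ Finset.range N, α ^ (-(i : ℤ) * (l.1 : ℤ)) • S i l') := by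
      simp only [Finset.smul_sum]
      rw [Finset.sum_comm]
      refine Finset.sum_congr rfl fun l' _ => ?_
      exact Finset.sum_congr rfl fun i _ => smul_comm _ _ _
    calc (N : F)⁻¹ • ∑ i ∈ Finset.range N, α ^ (-(i : ℤ) * (l.1 : ℤ)) •
        (∑ l' : Fin K2, α ^ (j * l'.1) • colBlock K2 (L i)ᵀ l'
          + ∑ l' : Fin T2, α ^ (j * (K2 + l'.1)) • S i l')
        = (N : F)⁻¹ • ((∑ i ∈ Finset.range N, α ^ (-(i : ℤ) * (l.1 : ℤ)) •
            (∑ l' : Fin K2, α ^ (j * l'.1) • colBlock K2 (L i)ᵀ l'))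
          + ∑ i ∈ Finset.range N, α ^ (-(i : ℤ) * (l.1 : ℤ)) •
            (∑ l' : Fin T2, α ^ (j * (K2 + l'.1)) • S i l')) := by
          simp only [smul_add, Finset.sum_add_distrib]
      _ = _ := by
          rw [hP, hQ, smul_add, Finset.smul_sum, Finset.smul_sum]
          congr 1
          · refine Finset.sum_congr rfl fun l' _ => ?_
            rw [smul_comm ((N : F)⁻¹), smul_smul ((N : F)⁻¹), inv_mul_cancel₀ hNF, one_smul]
          · exact Finset.sum_congr rfl fun l' _ => smul_comm _ _ _
end

section
/- (Correctness of the secure matrix inversion procedure.) Let F be a field, let m, N, K, T be positive integers, and let α ∈ F be a primitive N-th root of unity. Let A and Φ be m×m matrices over F such that P := Φ·A is invertible. Then: (1) A is invertible and A^{−1} = P^{−1}·Φ; and (2) if K divides m, Φ is partitioned column-wise into K equal blocks Φ_1, …, Φ_K, and R_1, …, R_T are arbitrary m×(m/K) matrices over F, then for every j ∈ {1, …, N}, P^{−1} · ( ∑_{l=1}^{K} Φ_l α^{(j−1)(l−1)} + ∑_{l=1}^{T} R_l α^{(j−1)(K+l−1)} ) = ∑_{l=1}^{K} (A^{−1})_l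 α^{(j−1)(l−1)} + ∑_{l=1}^{T} (P^{−1} R_l) α^{(j−1)(K+l−1)}, where (A^{−1})_l denotes the l-th column-wise partition of A^{−1} into K equal blocks. That is, multiplying its left-share of Φ by the public matrix P^{−1} gives each server j a valid (N, K, T) left-share of A^{−1} with key matrices P^{−1}R_1, …, P^{−1}R_T. -/
lemma mul_colBlock {F : Type*} [Field F] {b K : ℕ}
    (X : Matrix (Fin (K * b)) (Fin (K * b)) F)
    (M : Matrix (Fin (K * b)) (Fin (K * b)) F) (l : Fin K) :
    X * colBlock K M l = colBlock K (X * M) l := by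
  ext r c
  simp [colBlock, Matrix.mul_apply]

/-- Correctness of the secure matrix inversion procedure (Section VI-F of the paper):
if `P = Φ·A` is invertible, then (1) `A` is invertible with `A⁻¹ = P⁻¹·Φ`, and
(2) multiplying its `(N, K, T)` left-share of `Φ` by the public matrix `P⁻¹` gives
each server `j` a valid `(N, K, T)` left-share of `A⁻¹` with key matrices `P⁻¹R_l`.
The matrices are square of size `m = K·b`; servers and blocks are 0-indexed here. -/
theorem secure_matrix_inversion_correct {F : Type*} [Field F] {b : ℕ} (hb : 0 < b)
    (N K T : ℕ) (hN : 0 < N) (hKpos : 0 < K) (hT : 0 < T)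
    (α : F) (hα : IsPrimitiveRoot α N)
    (A Φ : Matrix (Fin (K * b)) (Fin (K * b)) F)
    (P : Matrix (Fin (K * b)) (Fin (K * b)) F) (hP : P = Φ * A) (hPu : IsUnit P)
    (R : Fin T → Matrix (Fin (K * b)) (Fin b) F) :
    (IsUnit A ∧ A⁻¹ = P⁻¹ * Φ) ∧
    (∀ j : ℕ,
      P⁻¹ * (∑ l : Fin K, α ^ (j * l.1) • colBlock K Φ l
              + ∑ l : Fin T, α ^ (j * (K + l.1)) • R l)
        = ∑ l : Fin K, α ^ (j * l.1) • colBlock K A⁻¹ l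
          + ∑ l : Fin T, α ^ (j * (K + l.1)) • (P⁻¹ * R l)) := by
  have hAu : IsUnit A := by
    rw [Matrix.isUnit_iff_isUnit_det] at *
    rw [hP, Matrix.det_mul] at hPu
    exact isUnit_of_mul_isUnit_right hPu
  have hinv : A⁻¹ = P⁻¹ * Φ := by
    apply Matrix.inv_eq_left_inv
    rw [Matrix.mul_assoc, ← hP, Matrix.nonsing_inv_mul _ ((Matrix.isUnit_iff_isUnit_det _).mp hPu)]
  refine ⟨⟨hAu, hinv⟩, fun j => ?_⟩
  rw [Matrix.mul_add, Matrix.mul_sum, Matrix.mul_sum]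
  congr 1
  · refine Finset.sum_congr rfl fun l _ => ?_
    rw [Matrix.mul_smul, mul_colBlock, hinv]
  · refine Finset.sum_congr rfl fun l _ => ?_
    rw [Matrix.mul_smul]
end

section
/- (Correctness of the straggler-mitigation scheme for computation with own data.) Let F be a field, let K_1, K_2, K_3, T be positive integers, set N_1 = K_1 + T, assume N_1·1_F ≠ 0 in F, and let α ∈ F be a primitive N_1-th root of unity. Let A_{i,j} (i ∈ [K_2], j ∈ [K_1]) and R_{i,j} (i ∈ [K_2], j ∈ [T]) be m'×n' matrices over F, and let B_{j,k} (j ∈ [K_1], k ∈ [K_3]) and S_{j,k} (j ∈ [T], k ∈ [K_3]) be n'×p' matrices over F. Define A(x_1, x_2) = ∑_{i=1}^{K_2} ∑_{j=1}^{K_1} A_{i,j} x_2^{i−1} x_1^{j−1} + ∑_{i=1}^{K_2} ∑_{j=1}^{T} R_{i,j} x_2^{i−1} x_1^{K_1+j−1} and B(x_1, x_2) = ∑_{j=1}^{K_1} ∑_{k=1}^{K_3} B_{j,k} x_1^{−(j−1)} x_2^{K_2(k−1)} + ∑_{j=1}^{T} ∑_{k=1}^{K_3} S_{j,k} x_1^{−(K_1+j−1)}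 x_2^{K_2(k−1)}. Then for every β ∈ F, (1/N_1) · ∑_{r=0}^{N_1−1} A(α^r, β) · B(α^r, β) = ∑_{i=1}^{K_2} ∑_{k=1}^{K_3} ( ∑_{j=1}^{K_1} A_{i,j} B_{j,k} + ∑_{j=1}^{T} R_{i,j} S_{j,k} ) β^{K_2(k−1)+i−1}. Consequently a user who knows the key matrices can recover the block products ∑_j A_{i,j}B_{j,k} after interpolating, by subtracting the pre-computed products ∑_j R_{i,j}S_{j,k}. -/
private theorem sum_comm5 {M : Type*} [AddCommMonoid M] {ι1 ι2 ι3 ι4 ι5 : Type*}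
    (s1 : Finset ι1) (s2 : Finset ι2) (s3 : Finset ι3) (s4 : Finset ι4) (s5 : Finset ι5)
    (f : ι1 → ι2 → ι3 → ι4 → ι5 → M) :
    ∑ a ∈ s1, ∑ b ∈ s2, ∑ c ∈ s3, ∑ d ∈ s4, ∑ e ∈ s5, f a b c d e
      = ∑ b ∈ s2, ∑ c ∈ s3, ∑ d ∈ s4, ∑ e ∈ s5, ∑ a ∈ s1, f a b c d e :=
  Finset.sum_comm.trans (Finset.sum_congr rfl fun _ _ =>
    Finset.sum_comm.trans (Finset.sum_congr rfl fun _ _ =>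
      Finset.sum_comm.trans (Finset.sum_congr rfl fun _ _ => Finset.sum_comm)))

private theorem sum_comm3' {M : Type*} [AddCommMonoid M] {ι1 ι2 ι3 : Type*}
    (s1 : Finset ι1) (s2 : Finset ι2) (s3 : Finset ι3) (f : ι1 → ι2 → ι3 → M) :
    ∑ a ∈ s1, ∑ b ∈ s2, ∑ c ∈ s3, f a b c = ∑ b ∈ s2, ∑ c ∈ s3, ∑ a ∈ s1, f a b c :=
  Finset.sum_comm.trans (Finset.sum_congr rfl fun _ _ => Finset.sum_comm)


/-- Correctness of the straggler-mitigation scheme for computation with own data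
(Section IV-D of the paper): with group size `N_1 = K_1 + T` and key exponents
`-(K_1 + j - 1)` in the second encoding, the average of a group's products equals the
evaluation at `β` of the polynomial whose coefficients are
`∑_j A_{i,j} B_{j,k} + ∑_j R_{i,j} S_{j,k}`; a user knowing the keys removes the
pre-computed products `∑_j R_{i,j} S_{j,k}`. Indices are 0-based here. -/
theorem straggler_own_data_group_average_correct {F : Type*} [Field F] {m' n' p' : ℕ}
    (K1 K2 K3 T : ℕ) (hK1 : 0 < K1) (hK2 : 0 < K2) (hK3 : 0 < K3) (hT : 0 < T)
    (N1 : ℕ) (hN1 : N1 = K1 + T) (hNF : (N1 : F) ≠ 0)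
    (α : F) (hα : IsPrimitiveRoot α N1)
    (A : Fin K2 → Fin K1 → Matrix (Fin m') (Fin n') F)
    (R : Fin K2 → Fin T → Matrix (Fin m') (Fin n') F)
    (B : Fin K1 → Fin K3 → Matrix (Fin n') (Fin p') F)
    (S : Fin T → Fin K3 → Matrix (Fin n') (Fin p') F) (β : F) :
    (N1 : F)⁻¹ • ∑ r ∈ Finset.range N1,
        ((∑ i : Fin K2, ∑ j : Fin K1, (β ^ i.1 * α ^ (r * j.1)) • A i j
            + ∑ i : Fin K2, ∑ j : Fin T, (β ^ i.1 * α ^ (r * (K1 + j.1))) • R i j) *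
         (∑ j : Fin K1, ∑ k : Fin K3,
              (α ^ (-(r : ℤ) * (j.1 : ℤ)) * β ^ (k.1 * K2)) • B j k
            + ∑ j : Fin T, ∑ k : Fin K3,
              (α ^ (-(r : ℤ) * ((K1 + j.1 : ℕ) : ℤ)) * β ^ (k.1 * K2)) • S j k))
      = ∑ i : Fin K2, ∑ k : Fin K3,
          β ^ (K2 * k.1 + i.1) •
            (∑ j : Fin K1, A i j * B j k + ∑ j : Fin T, R i j * S j k) := by
  subst hN1
  have hN0 : K1 + T ≠ 0 := by omega
  have hα0 : α ≠ 0 := hα.ne_zero hN0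
  -- orthogonality
  have key : ∀ a b : ℕ, a < K1 + T → b < K1 + T →
      ∑ r ∈ Finset.range (K1 + T), (α ^ (r * a) * α ^ (-(r : ℤ) * (b : ℤ))) =
        if a = b then ((K1 + T : ℕ) : F) else 0 := by
    intro a b ha hb
    have hterm : ∀ r : ℕ, α ^ (r * a) * α ^ (-(r : ℤ) * (b : ℤ)) =
        (α ^ ((a : ℤ) - b)) ^ r := by
      intro r
      rw [← zpow_natCast α (r * a), ← zpow_add₀ hα0, ← zpow_natCast (α ^ ((a : ℤ) - b)) r,
        ← zpow_mul]
      congr 1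
      push_cast
      ring
    simp only [hterm]
    by_cases hab : a = b
    · subst hab; simp
    · rw [if_neg hab]
      have hζ1 : α ^ ((a : ℤ) - b) ≠ 1 := by
        intro h
        have hd := (hα.zpow_eq_one_iff_dvd _).mp h
        have := Int.eq_zero_of_dvd_of_natAbs_lt_natAbs hd (by omega)
        omega
      have hζN : (α ^ ((a : ℤ) - b)) ^ (K1 + T) = 1 := by
        rw [← zpow_natCast, ← zpow_mul, mul_comm, zpow_mul, zpow_natCast, hα.pow_eq_one,
          one_zpow]
      rw [geom_sum_eq hζ1, hζN, sub_self, zero_div]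
  -- combine A,R and B,S into single families over Fin (K1+T)
  have hA : ∀ r : ℕ,
      (∑ i : Fin K2, ∑ j : Fin K1, (β ^ i.1 * α ^ (r * j.1)) • A i j
        + ∑ i : Fin K2, ∑ j : Fin T, (β ^ i.1 * α ^ (r * (K1 + j.1))) • R i j)
      = ∑ i : Fin K2, ∑ j : Fin (K1 + T),
          (β ^ i.1 * α ^ (r * j.1)) • Fin.append (A i) (R i) j := by
    intro r
    rw [← Finset.sum_add_distrib]
    refine Finset.sum_congr rfl fun i _ => ?_
    rw [Fin.sum_univ_add]
    simp [Fin.append_left, Fin.append_right]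
  have hB : ∀ r : ℕ,
      (∑ j : Fin K1, ∑ k : Fin K3, (α ^ (-(r : ℤ) * (j.1 : ℤ)) * β ^ (k.1 * K2)) • B j k
        + ∑ j : Fin T, ∑ k : Fin K3,
            (α ^ (-(r : ℤ) * ((K1 + j.1 : ℕ) : ℤ)) * β ^ (k.1 * K2)) • S j k)
      = ∑ j : Fin (K1 + T), ∑ k : Fin K3,
          (α ^ (-(r : ℤ) * (j.1 : ℤ)) * β ^ (k.1 * K2)) •
            Fin.append (fun j' => B j' k) (fun j' => S j' k) j := by
    intro r
    rw [Fin.sum_univ_add]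
    congr 1
    · refine Finset.sum_congr rfl fun j _ => Finset.sum_congr rfl fun k _ => ?_
      simp [Fin.append_left]
    · refine Finset.sum_congr rfl fun j _ => Finset.sum_congr rfl fun k _ => ?_
      simp [Fin.append_right]
  rw [Finset.sum_congr rfl fun r _ => congrArg₂ (· * ·) (hA r) (hB r)]
  simp only [Matrix.sum_mul, Matrix.mul_sum, Matrix.smul_mul, Matrix.mul_smul, smul_smul,
    Finset.smul_sum]
  rw [sum_comm5]
  simp only [← Finset.sum_smul]
  have hsc : ∀ (j2 : Fin (K1+T)) (k : Fin K3) (i : Fin K2) (j1 : Fin (K1+T)),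
      (∑ r ∈ Finset.range (K1+T),
          ((K1+T : ℕ) : F)⁻¹ * (α ^ (-(r:ℤ) * (j2.1:ℤ)) * β ^ (k.1 * K2) * (β ^ i.1 * α ^ (r * j1.1))))
        = if j1 = j2 then β ^ (K2 * k.1 + i.1) else 0 := by
    intro j2 k i j1
    have h1 : ∀ r : ℕ,
        ((K1+T : ℕ) : F)⁻¹ * (α ^ (-(r:ℤ) * (j2.1:ℤ)) * β ^ (k.1 * K2) * (β ^ i.1 * α ^ (r * j1.1)))
          = (((K1+T : ℕ) : F)⁻¹ * β ^ (k.1 * K2) * β ^ i.1) *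
              (α ^ (r * j1.1) * α ^ (-(r:ℤ) * (j2.1:ℤ))) := fun r => by ring
    rw [Finset.sum_congr rfl fun r _ => h1 r, ← Finset.mul_sum,
      key j1.1 j2.1 j1.isLt j2.isLt]
    by_cases h : j1 = j2
    · rw [if_pos (congrArg Fin.val h), if_pos h,
        show (((K1+T : ℕ) : F))⁻¹ * β ^ (k.1 * K2) * β ^ i.1 * ((K1+T : ℕ) : F)
            = (((K1+T : ℕ) : F)⁻¹ * ((K1+T : ℕ) : F)) * (β ^ (k.1 * K2) * β ^ i.1) from by ring,
        inv_mul_cancel₀ hNF, one_mul, ← pow_add]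
      congr 1
      ring
    · rw [if_neg (fun hv => h (Fin.val_injective hv)), if_neg h, mul_zero]
  simp only [hsc, ite_smul, zero_smul, Finset.sum_ite_eq', Finset.mem_univ, if_true]
  rw [sum_comm3']
  conv_lhs => rw [Finset.sum_comm]
  refine Finset.sum_congr rfl fun i _ => Finset.sum_congr rfl fun k _ => ?_
  rw [← Finset.smul_sum]
  congr 1
  rw [Fin.sum_univ_add]
  simp [Fin.append_left, Fin.append_right]
end
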